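/- arXiv:0710.1527 — 5 statements merged into one kernel-verified Lean document; each statement's English description precedes it below -/
import Mathlib

section
/- Fix k ≥ 1. In A = ℂ[x₁, x₂, …], for every t ≥ k+1 there exists a ∈ A with τ(R⁰_{k,t}) = R⁰_{k,t+k+1} + a·x₁, i.e., the shift of each generator R⁰_{k,t} lies in the ideal I_{k,0} + A·x₁, where I_{k,0} = Σ_{t ≥ k+1} A·R⁰_{k,t}. Consequently τ(I_{k,0}) ⊆ I_{k,0} + A·x₁. -/
open MvPolynomial

noncomputable section

abbrev A : Type := MvPolynomial ℕ+ ℂ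

/-- weight function: `x_m` has weight `m`. -/
def wtA : ℕ+ → ℕ := fun m => (m : ℕ)

/-- the index-shift map `τ : x_m ↦ x_{m+1}` (multiplicative on monomials). -/
def tau : A →ₐ[ℂ] A := rename (fun m => m + 1)

/-- `B = ℂ[x₂, x₃, …]`, the subalgebra generated by the variables `x_m`, `m ≥ 2`. -/
def BB : Subalgebra ℂ A := Algebra.adjoin ℂ {p : A | ∃ m : ℕ+, 2 ≤ m ∧ p = X m}

/-- `R⁰_{k,t}`: sum over ordered `(k+1)`-tuples of integers `≥ 1` summing to `t`. -/
def R0 (k t : ℕ) : A :=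
  ∑ m ∈ (Finset.Nat.antidiagonalTuple (k+1) t).filter (fun m => ∀ i, 1 ≤ m i),
    ∏ i, X ((m i).toPNat')

/-- `R¹_{k,t}`: sum over ordered `(k+1)`-tuples of integers `≥ 2` summing to `t`. -/
def R1 (k t : ℕ) : A :=
  ∑ m ∈ (Finset.Nat.antidiagonalTuple (k+1) t).filter (fun m => ∀ i, 2 ≤ m i),
    ∏ i, X ((m i).toPNat')

/-- the projection `ρ : A → B` along `A·x₁` (set `x₁ = 0`). -/
def rho : A →ₐ[ℂ] A := aeval (fun m : ℕ+ => if m = 1 then 0 else X m)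

/-- `I_{k,0} = Σ_{t ≥ k+1} A·R⁰_{k,t}`. -/
def Ik0 (k : ℕ) : Ideal A := Ideal.span {p : A | ∃ t, k + 1 ≤ t ∧ p = R0 k t}

/-- `I_{k,i} = Σ_{t ≥ k+1} A·R⁰_{k,t} + A·x₁^{k-i+1}`. -/
def Ik (k i : ℕ) : Ideal A := Ik0 k ⊔ Ideal.span {X 1 ^ (k - i + 1)}

/-- `I'_{k,k} = Σ_{t ≥ 2(k+1)} B·R¹_{k,t}` as a ℂ-subspace of `A`. -/
def Ipkk (k : ℕ) : Submodule ℂ A :=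
  Submodule.span ℂ {p : A | ∃ t, 2*(k+1) ≤ t ∧ ∃ b ∈ BB, p = b * R1 k t}

end

section
lemma tau_R0 (k t : ℕ) : tau (R0 k t) = R1 k (t + k + 1) := by
  unfold tau R0 R1
  rw [map_sum]
  refine Finset.sum_nbij' (fun m => fun i => m i + 1) (fun n => fun i => n i - 1) ?_ ?_ ?_ ?_ ?_
  · intro m hm
    simp only [Finset.mem_filter, Finset.Nat.mem_antidiagonalTuple] at hm ⊢
    constructor
    · rw [Finset.sum_add_distrib, hm.1, Finset.sum_const, Finset.card_univ,
        Fintype.card_fin, smul_eq_mul, mul_one]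
      omega
    · intro i; have := hm.2 i; omega
  · intro n hn
    simp only [Finset.mem_filter, Finset.Nat.mem_antidiagonalTuple] at hn ⊢
    constructor
    · have : ∀ i, n i - 1 + 1 = n i := fun i => by have := hn.2 i; omega
      have h2 : ∑ i, (n i - 1 + 1) = t + k + 1 := by rw [Finset.sum_congr rfl fun i _ => this i, hn.1]
      rw [Finset.sum_add_distrib] at h2
      simp [Finset.card_univ] at h2
      omega
    · intro i; have := hn.2 i; omega
  · intro m hm; ext i; simp
  · intro n hn; funext i
    simp only [Finset.mem_filter] at hn
    show n i - 1 + 1 = n i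
    have := hn.2 i; omega
  · intro m hm
    simp only [Finset.mem_filter] at hm
    rw [map_prod]
    refine Finset.prod_congr rfl fun i _ => ?_
    rw [rename_X]
    congr 1
    have h1 : 1 ≤ m i := hm.2 i
    have h2 : 0 < m i := h1
    have h3 : 0 < m i + 1 := Nat.succ_pos _
    apply PNat.coe_injective
    push_cast
    rw [PNat.toPNat'_coe h2, PNat.toPNat'_coe h3]


lemma R0_split (k s : ℕ) : ∃ a : A, R0 k s = R1 k s + a * X 1 := by
  classical
  unfold R0 R1
  set s1 := (Finset.Nat.antidiagonalTuple (k+1) s).filter (fun m => ∀ i, 1 ≤ m i) with hs1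
  rw [← Finset.sum_filter_add_sum_filter_not s1 (fun m => ∀ i, 2 ≤ m i)]
  have h1 : s1.filter (fun m => ∀ i, 2 ≤ m i)
      = (Finset.Nat.antidiagonalTuple (k+1) s).filter (fun m => ∀ i, 2 ≤ m i) := by
    rw [hs1, Finset.filter_filter]
    apply Finset.filter_congr
    intro m _
    constructor
    · exact fun h => h.2
    · exact fun h => ⟨fun i => le_trans one_le_two (h i), h⟩
  rw [h1]
  have hdvd : (X (1:ℕ+) : A) ∣ ∑ m ∈ s1.filter (fun m => ¬ ∀ i, 2 ≤ m i),
      ∏ i, X ((m i).toPNat') := by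
    apply Finset.dvd_sum
    intro m hm
    rw [hs1, Finset.filter_filter, Finset.mem_filter] at hm
    obtain ⟨-, h1all, hnot⟩ := hm
    push_neg at hnot
    obtain ⟨i0, hi0⟩ := hnot
    have hm1 : m i0 = 1 := by have := h1all i0; omega
    have hx : X ((m i0).toPNat') = (X 1 : A) := by rw [hm1]; rfl
    exact hx ▸ Finset.dvd_prod_of_mem _ (Finset.mem_univ i0)
  obtain ⟨c, hc⟩ := hdvd
  exact ⟨c, by rw [hc]; ring⟩

end

/-- `τ(R⁰_{k,t}) = R⁰_{k,t+k+1} + a·x₁` for some `a`, and consequently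
`τ(I_{k,0}) ⊆ I_{k,0} + A·x₁`. -/
theorem stmt7 (k : ℕ) (hk : 1 ≤ k) :
    (∀ t, k + 1 ≤ t → ∃ a : A, tau (R0 k t) = R0 k (t + k + 1) + a * X 1) ∧
    ∀ b ∈ Ik0 k, tau b ∈ Ik0 k ⊔ Ideal.span {X 1} := by

  have part1 : ∀ t, k + 1 ≤ t → ∃ a : A, tau (R0 k t) = R0 k (t + k + 1) + a * X 1 := by
    intro t _
    obtain ⟨a, ha⟩ := R0_split k (t + k + 1)
    exact ⟨-a, by rw [tau_R0, ha]; ring⟩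
  refine ⟨part1, ?_⟩
  intro b hb
  refine Submodule.span_induction ?_ ?_ ?_ ?_ hb
  · rintro p ⟨t, ht, rfl⟩
    obtain ⟨a, ha⟩ := part1 t ht
    rw [ha]
    refine add_mem ?_ ?_
    · exact Ideal.mem_sup_left (Ideal.subset_span ⟨t + k + 1, by omega, rfl⟩)
    · exact Ideal.mem_sup_right (Ideal.mem_span_singleton.mpr (Dvd.intro_left a rfl))
  · simp only [map_zero]; exact zero_mem _
  · intro x y _ _ hx hy; rw [map_add]; exact add_mem hx hy
  · intro r x _ hx
    rw [smul_eq_mul, map_mul]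
    exact Ideal.mul_mem_left _ _ hx
end

section
/- Fix k ≥ 1 and 0 ≤ i ≤ k. Consequently, in A = ℂ[x₁, x₂, …] there exist a nonzero scalar γ ∈ ℂ and b ∈ A such that x₂^{k-i+1}·x₁^{i} = γ·R⁰_{k,2k-i+2} + b·x₁^{i+1}. -/
open MvPolynomial

/-!
Let `m` be a `(k+1)`-tuple of integers `≥ 1` summing to `2(k+1) - i`, and let `c` be the number of
its entries equal to `1`. Every other entry is at least `2`, so `2(k+1) - i ≥ c + 2(k+1-c)`, i.e.
`c ≥ i`, with equality only when all other entries equal `2`. Hence the monomials of `R⁰_{k,2k+2-i}`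
are either divisible by `x₁^{i+1}` or equal to `x₁^i x₂^{k+1-i}`, and the latter occur a positive
number of times.
-/

open Finset

section OnesCount

variable {ι : Type*} [Fintype ι]

def onesCount (m : ι → ℕ) : ℕ := #{j | m j = 1}

theorem sum_add_onesCount (m : ι → ℕ) :
    ∑ j, m j + onesCount m = ∑ j, (m j + if m j = 1 then 1 else 0) := by
  rw [onesCount, card_filter, sum_add_distrib]

theorem two_mul_card_le_sum_add_onesCount {m : ι → ℕ} (hm : ∀ j, 1 ≤ m j) :
    2 * Fintype.card ι ≤ ∑ j, m j + onesCount m := by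
  rw [sum_add_onesCount, ← card_univ, mul_comm, ← smul_eq_mul, ← sum_const]
  refine sum_le_sum fun j _ => ?_
  have := hm j
  split_ifs <;> omega

theorem eq_two_of_sum_add_onesCount_eq {m : ι → ℕ} (hm : ∀ j, 1 ≤ m j)
    (h : ∑ j, m j + onesCount m = 2 * Fintype.card ι) {j : ι} (hj : m j ≠ 1) : m j = 2 := by
  rw [sum_add_onesCount, ← card_univ, mul_comm, ← smul_eq_mul, ← sum_const] at h
  have hle : ∀ j ∈ univ, 2 ≤ m j + if m j = 1 then 1 else 0 := fun j _ => by
    have := hm j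
    split_ifs <;> omega
  simpa [hj] using ((sum_eq_sum_iff_of_le hle).mp h.symm j (mem_univ j)).symm

theorem onesCount_indicator_one_two [DecidableEq ι] (s : Finset ι) :
    onesCount (fun j => if j ∈ s then 1 else 2) = #s := by
  unfold onesCount
  congr 1
  ext j
  by_cases hj : j ∈ s <;> simp [hj]

theorem sum_indicator_one_two_add_onesCount [DecidableEq ι] (s : Finset ι) :
    ∑ j, (if j ∈ s then 1 else 2) + #s = 2 * Fintype.card ι := by
  rw [← onesCount_indicator_one_two, sum_add_onesCount, ← card_univ, mul_comm, ← smul_eq_mul,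
    ← sum_const]
  refine sum_congr rfl fun j _ => ?_
  by_cases hj : j ∈ s <;> simp [hj]

end OnesCount

section Monomials

variable {ι : Type*} [Fintype ι]

theorem X_one_pow_onesCount_dvd_prod (m : ι → ℕ) :
    (X 1 : A) ^ onesCount m ∣ ∏ j, X (m j).toPNat' := by
  rw [← prod_filter_mul_prod_filter_not univ (fun j => m j = 1)]
  refine Dvd.dvd.mul_right (dvd_of_eq ?_) _
  rw [onesCount, ← prod_const]
  exact prod_congr rfl fun j hj => by rw [(mem_filter.mp hj).2]; rfl

theorem prod_X_toPNat'_of_one_or_two {m : ι → ℕ} (hm : ∀ j, m j ≠ 1 → m j = 2) :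
    ∏ j, (X (m j).toPNat' : A) = X 2 ^ (Fintype.card ι - onesCount m) * X 1 ^ onesCount m := by
  have hX : ∀ j, (X (m j).toPNat' : A) = if m j = 1 then X 1 else X 2 := fun j => by
    split_ifs with h
    · rw [h]; rfl
    · rw [hm j h]; rfl
  rw [prod_congr rfl fun j _ => hX j, prod_ite, prod_const, prod_const, mul_comm,
    ← card_univ, ← card_filter_add_card_filter_not (s := univ) (fun j => m j = 1), onesCount,
    Nat.add_sub_cancel_left]

end Monomials

theorem R0_two_mul_add_two_sub_eq (k i : ℕ) (hi : i ≤ k + 1) :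
    ∃ N : ℕ, N ≠ 0 ∧ ∃ d : A,
      R0 k (2 * k + 2 - i) = N • (X 2 ^ (k + 1 - i) * X 1 ^ i) + d * X 1 ^ (i + 1) := by
  classical
  set S := (Nat.antidiagonalTuple (k + 1) (2 * k + 2 - i)).filter (fun m => ∀ j, 1 ≤ m j)
  have mem_S {m : Fin (k + 1) → ℕ} : m ∈ S ↔ ∑ j, m j = 2 * k + 2 - i ∧ ∀ j, 1 ≤ m j := by
    rw [mem_filter, Nat.mem_antidiagonalTuple]
  have le_onesCount {m} (hm : m ∈ S) : i ≤ onesCount m := by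
    have := two_mul_card_le_sum_add_onesCount (mem_S.mp hm).2
    rw [Fintype.card_fin, (mem_S.mp hm).1] at this
    omega
  have fiber_term {m} (hm : m ∈ S.filter (onesCount · = i)) :
      ∏ j, (X (m j).toPNat' : A) = X 2 ^ (k + 1 - i) * X 1 ^ i := by
    obtain ⟨hmS, hci⟩ := mem_filter.mp hm
    have hsum : ∑ j, m j + onesCount m = 2 * Fintype.card (Fin (k + 1)) := by
      rw [Fintype.card_fin, (mem_S.mp hmS).1, hci]
      omega
    rw [prod_X_toPNat'_of_one_or_two fun j => eq_two_of_sum_add_onesCount_eq (mem_S.mp hmS).2 hsum,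
      Fintype.card_fin, hci]
  have fiber_nonempty : (S.filter (onesCount · = i)).Nonempty := by
    obtain ⟨s, -, hs⟩ := exists_subset_card_eq (s := (univ : Finset (Fin (k + 1))))
      (n := i) (by rwa [card_univ, Fintype.card_fin])
    refine ⟨fun j => if j ∈ s then 1 else 2, mem_filter.mpr ⟨mem_S.mpr ⟨?_, fun j => ?_⟩, ?_⟩⟩
    · have := sum_indicator_one_two_add_onesCount s
      rw [Fintype.card_fin, hs] at this
      omega
    · split_ifs <;> omega
    · rw [onesCount_indicator_one_two, hs]
  obtain ⟨d, hd⟩ : X 1 ^ (i + 1) ∣ ∑ m ∈ S.filter (¬onesCount · = i), ∏ j, (X (m j).toPNat' : A) :=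
    dvd_sum fun m hm => by
      obtain ⟨hmS, hci⟩ := mem_filter.mp hm
      exact (pow_dvd_pow _ (by have := le_onesCount hmS; omega)).trans
        (X_one_pow_onesCount_dvd_prod m)
  refine ⟨#(S.filter (onesCount · = i)), fiber_nonempty.card_pos.ne', d, ?_⟩
  rw [R0, ← sum_filter_add_sum_filter_not S (onesCount · = i),
    sum_congr rfl fun _ => fiber_term, sum_const, hd, mul_comm d]

theorem stmt9_general (k i : ℕ) (hi : i ≤ k) :
    ∃ γ : ℂ, γ ≠ 0 ∧ ∃ b : A,
      X 2 ^ (k - i + 1) * X 1 ^ i = γ • R0 k (2*k + 2 - i) + b * X 1 ^ (i + 1) := by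
  obtain ⟨N, hN, d, hR0⟩ := R0_two_mul_add_two_sub_eq k i (by omega)
  have hN' : (N : ℂ) ≠ 0 := Nat.cast_ne_zero.mpr hN
  refine ⟨(N : ℂ)⁻¹, inv_ne_zero hN', -((N : ℂ)⁻¹ • d), ?_⟩
  rw [hR0, ← Nat.cast_smul_eq_nsmul ℂ, smul_add, smul_smul, inv_mul_cancel₀ hN', one_smul,
    show k - i + 1 = k + 1 - i by omega, neg_mul, smul_mul_assoc]
  abel

/-- `x₂^{k-i+1}·x₁^i = γ·R⁰_{k,2k-i+2} + b·x₁^{i+1}` for some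
nonzero scalar `γ` and some `b ∈ A`. -/
theorem stmt9 (k i : ℕ) (hk : 1 ≤ k) (hi : i ≤ k) :
    ∃ γ : ℂ, γ ≠ 0 ∧ ∃ b : A,
      X 2 ^ (k - i + 1) * X 1 ^ i = γ • R0 k (2*k + 2 - i) + b * X 1 ^ (i + 1) :=
  stmt9_general k i hi
end

section
/- Fix k ≥ 1. Let I_{k,k} = Σ_{t≥k+1} A·R⁰_{k,t} + A·x₁ in A = ℂ[x₁,x₂,…] and I'_{k,k} = Σ_{t ≥ 2(k+1)} B·R¹_{k,t} in B = ℂ[x₂,x₃,…]. Then I_{k,k} = I'_{k,k} ⊕ A·x₁ as a direct sum of vector subspaces of A, and the projection ρ: A → B along A·x₁ satisfies ρ(I_{k,k}) = I'_{k,k}. -/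
open MvPolynomial

/-! `ρ` is an idempotent algebra map with image `B` and kernel `A·x₁`. It sends `R⁰_{k,t}` to
`R¹_{k,t}`, since a monomial of `R⁰_{k,t}` with an entry `1` contains `x₁`; and `R¹_{k,t} = 0` for
`t < 2(k+1)`. Hence `ρ(I_{k,k}) = I'_{k,k}`, and since `I_{k,k}` contains `ker ρ`, it splits as
`ρ(I_{k,k}) ⊕ ker ρ`. -/

theorem Submodule.map_sup_ker_of_isIdempotentElem {R M : Type*} [Ring R] [AddCommGroup M]
    [Module R M] {f : M →ₗ[R] M} (hf : IsIdempotentElem f) {W : Submodule R M}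
    (hW : LinearMap.ker f ≤ W) : W.map f ⊔ LinearMap.ker f = W := by
  have sub_mem_ker (x : M) : x - f x ∈ LinearMap.ker f := by
    rw [LinearMap.mem_ker, map_sub, ← Module.End.mul_apply, hf.eq, sub_self]
  refine le_antisymm (sup_le ?_ hW) fun x hx => ?_
  · rintro _ ⟨x, hx, rfl⟩
    simpa using W.sub_mem hx (hW (sub_mem_ker x))
  · simpa using Submodule.add_mem_sup (Submodule.mem_map_of_mem (f := f) hx) (sub_mem_ker x)

lemma rho_X (m : ℕ+) : rho (X m) = if m = 1 then 0 else X m :=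
  aeval_X _ _

lemma rho_eq_self_of_mem_BB {b : A} (hb : b ∈ BB) : rho b = b := by
  refine AlgHom.adjoin_le_equalizer rho (AlgHom.id ℂ A) ?_ hb
  rintro _ ⟨m, hm, rfl⟩
  rw [AlgHom.id_apply, rho_X, if_neg (by rintro rfl; exact absurd hm (by decide))]

lemma rho_mem_BB (p : A) : rho p ∈ BB := by
  suffices rho.range ≤ BB from this ⟨p, rfl⟩
  rw [rho, aeval_range, Algebra.adjoin_le_iff]
  rintro _ ⟨m, rfl⟩
  dsimp only
  split_ifs with h
  · exact zero_mem BB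
  · exact Algebra.subset_adjoin ⟨m, PNat.add_one_le_iff.mpr (lt_of_le_of_ne' one_le h), rfl⟩

lemma isIdempotentElem_rho : IsIdempotentElem rho.toLinearMap :=
  LinearMap.ext fun p => rho_eq_self_of_mem_BB (rho_mem_BB p)

lemma sub_rho_mem_span_X_one (p : A) : p - rho p ∈ Ideal.span {(X 1 : A)} := by
  induction p using MvPolynomial.induction_on with
  | C a => simp [rho]
  | add p q hp hq => simpa [add_sub_add_comm] using add_mem hp hq
  | mul_X p n hp =>
      rw [map_mul, rho_X]
      split_ifs with h
      · rw [mul_zero, sub_zero, h]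
        exact Ideal.mul_mem_left _ _ (Ideal.mem_span_singleton_self _)
      · rw [← sub_mul]
        exact Ideal.mul_mem_right _ _ hp

lemma ker_rho : LinearMap.ker rho.toLinearMap = (Ideal.span {(X 1 : A)}).restrictScalars ℂ := by
  refine le_antisymm (fun p hp => ?_) fun p hp => ?_
  · have hp : rho p = 0 := hp
    simpa [hp] using sub_rho_mem_span_X_one p
  · obtain ⟨c, rfl⟩ := Ideal.mem_span_singleton'.mp hp
    simp [rho_X]

lemma toPNat'_eq_one_iff {n : ℕ} (hn : 1 ≤ n) : n.toPNat' = 1 ↔ n = 1 := by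
  rw [← PNat.coe_inj, PNat.toPNat'_coe hn, PNat.one_coe]

lemma rho_prod_X_toPNat' {n : ℕ} (m : Fin n → ℕ) (hm : ∀ i, 1 ≤ m i) :
    rho (∏ i, X (m i).toPNat') = if ∀ i, 2 ≤ m i then ∏ i, X (m i).toPNat' else 0 := by
  have rho_factor (i : Fin n) :
      rho (X (m i).toPNat') = if 2 ≤ m i then X (m i).toPNat' else 0 := by
    have := hm i
    simp only [rho_X, toPNat'_eq_one_iff this]
    split_ifs <;> first | rfl | omega
  simp only [map_prod, rho_factor, Finset.prod_ite_zero, Finset.mem_univ, true_implies]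

lemma rho_R0 (k t : ℕ) : rho (R0 k t) = R1 k t := by
  rw [R0, map_sum, Finset.sum_congr rfl fun m hm => rho_prod_X_toPNat' m (Finset.mem_filter.1 hm).2,
    ← Finset.sum_filter, Finset.filter_filter, R1]
  refine Finset.sum_congr (Finset.filter_congr fun m _ => ?_) fun _ _ => rfl
  exact ⟨And.right, fun h => ⟨fun i => (h i).trans' one_le_two, h⟩⟩

lemma R1_eq_zero_of_lt {k t : ℕ} (ht : t < 2 * (k + 1)) : R1 k t = 0 := by
  refine Finset.sum_eq_zero fun m hm => absurd ht (not_lt.mpr ?_)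
  rw [Finset.mem_filter, Finset.Nat.mem_antidiagonalTuple] at hm
  calc 2 * (k + 1) = ∑ _i : Fin (k + 1), 2 := by simp [mul_comm]
    _ ≤ ∑ i, m i := Finset.sum_le_sum fun i _ => hm.2 i
    _ = t := hm.1

lemma R1_mem_BB (k t : ℕ) : R1 k t ∈ BB := by
  refine Subalgebra.sum_mem _ fun m hm => Subalgebra.prod_mem _ fun i _ => ?_
  have hmi := (Finset.mem_filter.1 hm).2 i
  refine Algebra.subset_adjoin ⟨(m i).toPNat', ?_, rfl⟩
  rw [← PNat.coe_le_coe, PNat.toPNat'_coe (by omega)]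
  exact hmi

lemma mul_mem_Ipkk {k : ℕ} {b x : A} (hb : b ∈ BB) (hx : x ∈ Ipkk k) : b * x ∈ Ipkk k := by
  induction hx using Submodule.span_induction with
  | mem p hp =>
      obtain ⟨t, ht, c, hc, rfl⟩ := hp
      exact Submodule.subset_span ⟨t, ht, b * c, mul_mem hb hc, (mul_assoc _ _ _).symm⟩
  | zero => simp
  | add x y _ _ hx hy => simpa [mul_add] using add_mem hx hy
  | smul a x _ hx => simpa [mul_smul_comm] using Submodule.smul_mem _ a hx

lemma R1_mem_Ipkk (k t : ℕ) : R1 k t ∈ Ipkk k := by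
  rcases lt_or_ge t (2 * (k + 1)) with ht | ht
  · simp [R1_eq_zero_of_lt ht]
  · exact Submodule.subset_span ⟨t, ht, 1, one_mem BB, (one_mul _).symm⟩

lemma map_rho_Ik0 (k : ℕ) : ((Ik0 k).restrictScalars ℂ).map rho.toLinearMap = Ipkk k := by
  refine le_antisymm (Submodule.map_le_iff_le_comap.mpr fun x hx => ?_) (Submodule.span_le.mpr ?_)
  · change x ∈ Submodule.span A _ at hx
    change rho x ∈ Ipkk k
    induction hx using Submodule.span_induction with
    | mem p hp =>
        obtain ⟨t, -, rfl⟩ := hp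
        exact rho_R0 k t ▸ R1_mem_Ipkk k t
    | zero => simp
    | add x y _ _ hx hy => simpa using add_mem hx hy
    | smul a x _ hx => simpa using mul_mem_Ipkk (rho_mem_BB a) hx
  · rintro _ ⟨t, ht, b, hb, rfl⟩
    refine ⟨b * R0 k t, Ideal.mul_mem_left _ b (Ideal.subset_span ⟨t, by omega, rfl⟩), ?_⟩
    simp [rho_eq_self_of_mem_BB hb, rho_R0]

lemma Ik_self (k : ℕ) : Ik k k = Ik0 k ⊔ Ideal.span {X 1} := by
  rw [Ik, Nat.sub_self, pow_one]

lemma map_rho_Ik (k : ℕ) : ((Ik k k).restrictScalars ℂ).map rho.toLinearMap = Ipkk k := by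
  rw [Ik_self, Submodule.restrictScalars_sup, Submodule.map_sup, map_rho_Ik0,
    ← ker_rho, LinearMap.le_ker_iff_map.mp le_rfl, sup_bot_eq]

theorem stmt11_general (k : ℕ) :
    (Ik k k).restrictScalars ℂ = Ipkk k ⊔ ((Ideal.span {X 1} : Ideal A).restrictScalars ℂ) ∧
    Disjoint (Ipkk k) ((Ideal.span {X 1} : Ideal A).restrictScalars ℂ) ∧
    Submodule.map rho.toLinearMap ((Ik k k).restrictScalars ℂ) = Ipkk k := by
  have ker_le : LinearMap.ker rho.toLinearMap ≤ (Ik k k).restrictScalars ℂ := by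
    rw [ker_rho, Ik_self]
    exact Submodule.restrictScalars_mono ℂ le_sup_right
  refine ⟨?_, ?_, map_rho_Ik k⟩
  · rw [← map_rho_Ik k, ← ker_rho]
    exact (Submodule.map_sup_ker_of_isIdempotentElem isIdempotentElem_rho ker_le).symm
  · rw [← map_rho_Ik k, ← ker_rho]
    exact (LinearMap.IsIdempotentElem.isCompl isIdempotentElem_rho).disjoint.mono_left
      LinearMap.map_le_range

/-- `I_{k,k} = I'_{k,k} ⊕ A·x₁` as ℂ-subspaces, and `ρ(I_{k,k}) = I'_{k,k}`. -/
theorem stmt11 (k : ℕ) (hk : 1 ≤ k) :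
    (Ik k k).restrictScalars ℂ = Ipkk k ⊔ ((Ideal.span {X 1} : Ideal A).restrictScalars ℂ) ∧
    Disjoint (Ipkk k) ((Ideal.span {X 1} : Ideal A).restrictScalars ℂ) ∧
    Submodule.map rho.toLinearMap ((Ik k k).restrictScalars ℂ) = Ipkk k :=
  stmt11_general k
end

section
/- Fix k ≥ 1. For t ≥ k+1, τ(R⁰_{k,t}) ≡ R⁰_{k,t+k+1} modulo the ideal A·x₁; more generally, for every a in the ideal I_{k,0} = Σ_{t≥k+1} A·R⁰_{k,t} there exist b ∈ I_{k,0} and c ∈ A with τ(a) = b + c·x₁ (so that τ(I_{k,0}) ⊆ I_{k,k} where I_{k,k} = I_{k,0} + A·x₁). -/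
open MvPolynomial

/-
`τ` sends the monomial `x_{m₀} ⋯ x_{m_k}` to `x_{m₀+1} ⋯ x_{m_k+1}`, so it maps the
tuples with entries `≥ 1` summing to `t` bijectively onto the tuples with entries `≥ 2` summing to
`t + k + 1`: `τ(R⁰_{k,t}) = R¹_{k,t+k+1}`. The tuples with entries `≥ 1` but not all `≥ 2` contain
an entry `1`, so `R⁰_{k,s} - R¹_{k,s}` is a multiple of `x₁`. Since `τ` is a ring homomorphism,
it then maps the ideal generated by the `R⁰_{k,t}` into that ideal plus `A·x₁`.
-/

lemma Nat.toPNat'_add_one_of_pos {n : ℕ} (hn : 0 < n) : n.toPNat' + 1 = (n + 1).toPNat' := by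
  apply PNat.coe_injective
  simp only [PNat.add_coe, Nat.toPNat'_coe, PNat.one_coe]
  split_ifs <;> omega

lemma X_one_dvd_R0_sub_R1 (k t : ℕ) : (X 1 : A) ∣ R0 k t - R1 k t := by
  set S := Finset.Nat.antidiagonalTuple (k + 1) t
  have hsub : S.filter (fun m => ∀ i, 2 ≤ m i) ⊆ S.filter (fun m => ∀ i, 1 ≤ m i) :=
    Finset.monotone_filter_right S fun _ _ h i => (h i).trans' one_le_two
  rw [R0, R1, ← Finset.sum_sdiff hsub, add_sub_cancel_right]
  refine Finset.dvd_sum fun m hm => ?_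
  simp only [Finset.mem_sdiff, Finset.mem_filter, not_and, not_forall, not_le] at hm
  obtain ⟨⟨hmS, hm1⟩, hm2⟩ := hm
  obtain ⟨i, hi⟩ := hm2 hmS
  have hmi : m i = 1 := le_antisymm (Nat.lt_succ_iff.mp hi) (hm1 i)
  have hdvd := Finset.dvd_prod_of_mem (fun i => (X (m i).toPNat' : A)) (Finset.mem_univ i)
  rwa [hmi, show (1 : ℕ).toPNat' = 1 from rfl] at hdvd

lemma exists_tau_R0_eq_R0_add_mul_X_one (k t : ℕ) :
    ∃ c : A, tau (R0 k t) = R0 k (t + k + 1) + c * X 1 := by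
  obtain ⟨c, hc⟩ := X_one_dvd_R0_sub_R1 k (t + k + 1)
  exact ⟨-c, by rw [tau_R0]; linear_combination -hc⟩

lemma mem_Ik_self_iff {k : ℕ} {p : A} : p ∈ Ik k k ↔ ∃ b ∈ Ik0 k, ∃ c : A, p = b + c * X 1 := by
  simp only [Ik, Nat.sub_self, zero_add, pow_one, Submodule.mem_sup, Ideal.mem_span_singleton']
  constructor
  · rintro ⟨b, hb, _, ⟨c, rfl⟩, rfl⟩
    exact ⟨b, hb, c, rfl⟩
  · rintro ⟨b, hb, c, rfl⟩
    exact ⟨b, hb, _, ⟨c, rfl⟩, rfl⟩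

lemma map_tau_Ik0_le_Ik (k : ℕ) : (Ik0 k).map tau ≤ Ik k k := by
  rw [Ik0, Ideal.map_span, Ideal.span_le]
  rintro _ ⟨_, ⟨t, ht, rfl⟩, rfl⟩
  obtain ⟨c, hc⟩ := exists_tau_R0_eq_R0_add_mul_X_one k t
  exact mem_Ik_self_iff.mpr ⟨_, Ideal.subset_span ⟨t + k + 1, by omega, rfl⟩, c, hc⟩

theorem stmt14_general (k : ℕ) :
    (∀ t, k + 1 ≤ t → ∃ c : A, tau (R0 k t) = R0 k (t + k + 1) + c * X 1) ∧
    ∀ a ∈ Ik0 k, ∃ b ∈ Ik0 k, ∃ c : A, tau a = b + c * X 1 :=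
  ⟨fun t _ => exists_tau_R0_eq_R0_add_mul_X_one k t,
    fun _ ha => mem_Ik_self_iff.mp (map_tau_Ik0_le_Ik k (Ideal.mem_map_of_mem tau ha))⟩

/-- `τ(R⁰_{k,t}) ≡ R⁰_{k,t+k+1}` mod `A·x₁` for `t ≥ k+1`; more
generally every `a ∈ I_{k,0}` has `τ(a) = b + c·x₁` with `b ∈ I_{k,0}`. -/
theorem stmt14 (k : ℕ) (hk : 1 ≤ k) :
    (∀ t, k + 1 ≤ t → ∃ c : A, tau (R0 k t) = R0 k (t + k + 1) + c * X 1) ∧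
    ∀ a ∈ Ik0 k, ∃ b ∈ Ik0 k, ∃ c : A, tau a = b + c * X 1 :=
  stmt14_general k
end

section
/- Fix k ≥ 1 and 0 ≤ i ≤ k. For every t ≥ k+1 there exists a ∈ A = ℂ[x₁, x₂, …] such that (1/i!)·τ(R⁰_{k,t})·x₁^{i} = (1/i!)·R⁰_{k,t+k+1}·x₁^{i} + a·x₁^{i+1}; in particular the left-hand side lies in I_{k,k-i} = Σ_{s≥k+1} A·R⁰_{k,s} + A·x₁^{i+1}. -/
open MvPolynomial

lemma toPNat'_succ (n : ℕ) (hn : 1 ≤ n) : (n + 1).toPNat' = n.toPNat' + 1 := by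
  apply PNat.coe_injective
  simp [Nat.toPNat']
  omega

lemma X1_dvd_sub (k s : ℕ) : (X 1 : A) ∣ (R0 k s - R1 k s) := by
  unfold R0 R1
  have hsub : (Finset.Nat.antidiagonalTuple (k+1) s).filter (fun m => ∀ i, 2 ≤ m i)
      ⊆ (Finset.Nat.antidiagonalTuple (k+1) s).filter (fun m => ∀ i, 1 ≤ m i) := by
    intro m hm
    simp only [Finset.mem_filter] at hm ⊢
    exact ⟨hm.1, fun i => (hm.2 i).trans' (by omega)⟩
  rw [← Finset.sum_sdiff_eq_sub hsub]
  apply Finset.dvd_sum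
  intro m hm
  simp only [Finset.mem_sdiff, Finset.mem_filter, not_and, not_forall] at hm
  obtain ⟨⟨hmem, h1⟩, h2⟩ := hm
  obtain ⟨j, hj⟩ := h2 hmem
  have hmj : m j = 1 := by have := h1 j; omega
  have hx : X ((m j).toPNat') = (X 1 : A) := by rw [hmj]; rfl
  calc (X 1 : A) = X ((m j).toPNat') := hx.symm
    _ ∣ ∏ i, X ((m i).toPNat') := Finset.dvd_prod_of_mem _ (Finset.mem_univ j)

/-- `(1/i!)·τ(R⁰_{k,t})·x₁^i = (1/i!)·R⁰_{k,t+k+1}·x₁^i + a·x₁^{i+1}`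
for some `a`; in particular the left-hand side lies in `I_{k,k-i}`. -/
theorem stmt15 (k i : ℕ) (hk : 1 ≤ k) (hi : i ≤ k) (t : ℕ) (ht : k + 1 ≤ t) :
    (∃ a : A, ((i.factorial : ℂ)⁻¹) • (tau (R0 k t) * X 1 ^ i)
        = ((i.factorial : ℂ)⁻¹) • (R0 k (t + k + 1) * X 1 ^ i) + a * X 1 ^ (i + 1)) ∧
    ((i.factorial : ℂ)⁻¹) • (tau (R0 k t) * X 1 ^ i) ∈ Ik k (k - i) := by
  obtain ⟨c, hc⟩ := X1_dvd_sub k (t + k + 1)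
  have key : tau (R0 k t) = R0 k (t + k + 1) - X 1 * c := by
    rw [tau_R0, ← hc]; ring
  refine ⟨⟨-(((i.factorial : ℂ)⁻¹) • c), ?_⟩, ?_⟩
  · rw [key]
    simp only [Algebra.smul_def]
    ring
  · have hki : k - (k - i) = i := Nat.sub_sub_self hi
    rw [key]
    have h1 : ((i.factorial : ℂ)⁻¹) • (R0 k (t + k + 1) * X 1 ^ i) ∈ Ik0 k := by
      rw [Algebra.smul_def, ← mul_assoc]
      unfold Ik0
      refine Ideal.mul_mem_right _ _ (Ideal.mul_mem_left _ _ (Ideal.subset_span ?_))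
      exact ⟨t + k + 1, by omega, rfl⟩
    have h2 : ((i.factorial : ℂ)⁻¹) • (X 1 * c * X 1 ^ i) ∈
        Ideal.span {(X 1 : A) ^ (k - (k - i) + 1)} := by
      rw [Algebra.smul_def, Ideal.mem_span_singleton, hki]
      exact ⟨algebraMap ℂ A (i.factorial : ℂ)⁻¹ * c, by ring⟩
    have heq : ((i.factorial : ℂ)⁻¹) • ((R0 k (t + k + 1) - X 1 * c) * X 1 ^ i)
        = ((i.factorial : ℂ)⁻¹) • (R0 k (t + k + 1) * X 1 ^ i)
          - ((i.factorial : ℂ)⁻¹) • (X 1 * c * X 1 ^ i) := by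
      simp only [Algebra.smul_def]; ring
    rw [heq]
    exact Submodule.sub_mem _ (Ideal.mem_sup_left h1) (Ideal.mem_sup_right h2)
end
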